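/- An n-tuple (P_1,…,P_n) of elements of K⟨n⟩ is a cyclic gradient, i.e. there exists P ∈ K⟨n⟩ with δ_j P = P_j for all 1 ≤ j ≤ n, if and only if δ_k(Σ_{j=1}^n X_j P_j) = (N + I) P_k for every k with 1 ≤ k ≤ n, where I is the identity map of K⟨n⟩. -/

import Mathlib

/-! Setup: the free associative algebra `K⟨X_1,…,X_n⟩` realized as the monoid
algebra of the free monoid on `Fin n`, together with the partial cyclic
derivatives `δ_j`, the number operator `N` and the cyclic symmetrization `C`. -/

noncomputable section

/-- `K⟨n⟩`, the ring of polynomials in `n` noncommuting indeterminates. -/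
abbrev FreePoly (K : Type) [CommSemiring K] (n : ℕ) : Type :=
  MonoidAlgebra K (FreeMonoid (Fin n))

/-- The monomial `X_{i_1} ⋯ X_{i_p}` associated to the word `w = [i_1,…,i_p]`. -/
def mono (K : Type) [Field K] {n : ℕ} (w : List (Fin n)) : FreePoly K n :=
  MonoidAlgebra.single (FreeMonoid.ofList w) 1

/-- The indeterminate `X k`. -/
def Xvar (K : Type) [Field K] {n : ℕ} (k : Fin n) : FreePoly K n := mono K [k]

variable {K : Type} [Field K] [CharZero K] {n : ℕ}

/-- The partial cyclic derivative `δ_j = μ̃ ∘ ∂_j`: on a monomial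
`X_{i_0} ⋯ X_{i_s}` it gives `∑_{p : i_p = j} X_{i_{p+1}} ⋯ X_{i_s} X_{i_0} ⋯ X_{i_{p-1}}`. -/
def cycDeriv (j : Fin n) : FreePoly K n →ₗ[K] FreePoly K n :=
  (Finsupp.lsum K fun w => LinearMap.toSpanSingleton K _
    (∑ p : Fin (FreeMonoid.toList w).length,
      if (FreeMonoid.toList w).get p = j then
        mono K ((FreeMonoid.toList w).drop (p + 1) ++ (FreeMonoid.toList w).take p)
      else 0)) ∘ₗ (MonoidAlgebra.coeffLinearEquiv K).toLinearMap

/-- The number operator `N`, multiplying a monomial by its degree. -/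
def numOp : FreePoly K n →ₗ[K] FreePoly K n :=
  (Finsupp.lsum K fun w => LinearMap.toSpanSingleton K _
    ((FreeMonoid.toList w).length • mono K (FreeMonoid.toList w))) ∘ₗ
    (MonoidAlgebra.coeffLinearEquiv K).toLinearMap

/-- The cyclic symmetrization `C`, sending a monomial of degree `p ≥ 1` to the
sum of its `p` cyclic rotations (and `1` to `0`). -/
def cycSym : FreePoly K n →ₗ[K] FreePoly K n :=
  (Finsupp.lsum K fun w => LinearMap.toSpanSingleton K _
    (∑ p ∈ Finset.range (FreeMonoid.toList w).length,
      mono K ((FreeMonoid.toList w).rotate (p + 1)))) ∘ₗ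
    (MonoidAlgebra.coeffLinearEquiv K).toLinearMap

end

/-! Summing `X_j δ_j` over `j` turns a monomial into the sum of its cyclic rotations, so
`∑ X_j δ_j = C`; since `δ_k` is blind to rotations, `δ_k C = δ_k N`. Both `N + I` and the
inverse of `N` are degree scalings (the degree-`p` component is multiplied by `f p`), and `δ_k`,
which lowers degrees by one, shifts them: `δ_k ∘ (f(N)) = f(N + I) ∘ δ_k`. Hence
`δ_k C = (N + I) δ_k`, which is the forward direction, and conversely
`Q = N⁻¹ (∑ X_j P_j)` satisfies `δ_k Q = (N + I)⁻¹ δ_k (∑ X_j P_j) = P_k`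
(the junk value `0⁻¹ = 0` on constants never matters: the shift formula ignores `f 0`). -/

noncomputable section

variable {K : Type} [Field K] {n : ℕ}

lemma lsum_toSpanSingleton_comp_coeff_mono (g : FreeMonoid (Fin n) → FreePoly K n)
    (w : List (Fin n)) :
    ((Finsupp.lsum K fun v => LinearMap.toSpanSingleton K _ (g v)) ∘ₗ
      (MonoidAlgebra.coeffLinearEquiv K).toLinearMap) (mono K w) = g (FreeMonoid.ofList w) := by
  simp [mono]

lemma linearMap_ext_of_mono {M : Type*} [AddCommMonoid M] [Module K M]
    {f g : FreePoly K n →ₗ[K] M} (h : ∀ w, f (mono K w) = g (mono K w)) : f = g :=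
  MonoidAlgebra.lhom_ext' fun x => LinearMap.ext_ring (by simpa [mono] using h x.toList)

def degScale (f : ℕ → K) : FreePoly K n →ₗ[K] FreePoly K n :=
  (Finsupp.lsum K fun w => LinearMap.toSpanSingleton K _
    (f (FreeMonoid.toList w).length • mono K (FreeMonoid.toList w))) ∘ₗ
    (MonoidAlgebra.coeffLinearEquiv K).toLinearMap

lemma degScale_mono (f : ℕ → K) (w : List (Fin n)) :
    degScale f (mono K w) = f w.length • mono K w := by
  rw [degScale, lsum_toSpanSingleton_comp_coeff_mono, FreeMonoid.toList_ofList]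

lemma degScale_degScale {f g : ℕ → K} (hfg : ∀ p, f p * g p = 1) (Q : FreePoly K n) :
    degScale f (degScale g Q) = Q := by
  suffices degScale f ∘ₗ degScale g = (LinearMap.id : FreePoly K n →ₗ[K] _) from
    LinearMap.congr_fun this Q
  refine linearMap_ext_of_mono fun w => ?_
  rw [LinearMap.comp_apply, degScale_mono, map_smul, degScale_mono, smul_smul, mul_comm, hfg,
    one_smul, LinearMap.id_apply]

lemma numOp_mono (w : List (Fin n)) : numOp (mono K w) = w.length • mono K w := by
  rw [numOp, lsum_toSpanSingleton_comp_coeff_mono, FreeMonoid.toList_ofList]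

lemma numOp_add_id :
    numOp + LinearMap.id = (degScale fun p => (p : K) + 1 : FreePoly K n →ₗ[K] _) :=
  linearMap_ext_of_mono fun w => by
    simp [numOp_mono, degScale_mono, add_smul, Nat.cast_smul_eq_nsmul]

lemma cycSym_mono (w : List (Fin n)) :
    cycSym (mono K w) = ∑ q ∈ Finset.range w.length, mono K (w.rotate (q + 1)) := by
  rw [cycSym, lsum_toSpanSingleton_comp_coeff_mono, FreeMonoid.toList_ofList]

lemma cycDeriv_mono (j : Fin n) (w : List (Fin n)) :
    cycDeriv j (mono K w) = ∑ q ∈ Finset.range w.length,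
      if (w.rotate q).head? = some j then mono K (w.rotate q).tail else 0 := by
  rw [cycDeriv, lsum_toSpanSingleton_comp_coeff_mono, FreeMonoid.toList_ofList,
    ← Fin.sum_univ_eq_sum_range]
  refine Finset.sum_congr rfl fun p _ => ?_
  rw [List.rotate_eq_drop_append_take p.isLt.le, List.drop_eq_getElem_cons p.isLt]
  simp [eq_comm]

lemma Function.Periodic.sum_range_add {M : Type*} [AddCancelCommMonoid M] {h : ℕ → M} {L : ℕ}
    (hh : Function.Periodic h L) (c : ℕ) :
    ∑ q ∈ Finset.range L, h (q + c) = ∑ q ∈ Finset.range L, h q := by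
  induction c generalizing h with
  | zero => rfl
  | succ c ih =>
    have hshift : ∑ q ∈ Finset.range L, h (q + 1) = ∑ q ∈ Finset.range L, h q := by
      refine add_right_cancel (b := h 0) ?_
      rw [← Finset.sum_range_succ', Finset.sum_range_succ, ← hh 0, zero_add]
    have hh' : Function.Periodic (fun x => h (x + 1)) L := fun x => by
      simp only [add_right_comm x L 1, hh (x + 1)]
    rw [← hshift, ← ih hh']
    simp only [add_assoc]

lemma cycDeriv_mono_rotate (j : Fin n) (w : List (Fin n)) (m : ℕ) :
    cycDeriv j (mono K (w.rotate m)) = cycDeriv j (mono K w) := by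
  set φ : List (Fin n) → FreePoly K n := fun l => if l.head? = some j then mono K l.tail else 0
  have hper : Function.Periodic (fun q => φ (w.rotate q)) w.length := fun q => by
    simp only [← List.rotate_rotate, ← List.length_rotate w q, List.rotate_length]
  simp only [cycDeriv_mono, List.length_rotate, List.rotate_rotate]
  simp_rw [add_comm m]
  exact hper.sum_range_add m

lemma sum_Xvar_mul_ite_head {l : List (Fin n)} (hl : l ≠ []) :
    ∑ j, Xvar K j * (if l.head? = some j then mono K l.tail else 0) = mono K l := by
  obtain ⟨a, t, rfl⟩ := List.exists_cons_of_ne_nil hl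
  simp [Xvar, mono, MonoidAlgebra.single_mul_single]

lemma sum_Xvar_mul_cycDeriv (Q : FreePoly K n) :
    ∑ j, Xvar K j * cycDeriv j Q = cycSym Q := by
  suffices ∑ j, LinearMap.mulLeft K (Xvar K j) ∘ₗ cycDeriv j = cycSym by
    simpa using LinearMap.congr_fun this Q
  refine linearMap_ext_of_mono fun w => ?_
  have hper : Function.Periodic (fun q => mono K (w.rotate q)) w.length := fun q => by
    simp only [← List.rotate_rotate, ← List.length_rotate w q, List.rotate_length]
  simp only [LinearMap.sum_apply, LinearMap.comp_apply, LinearMap.mulLeft_apply, cycDeriv_mono,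
    Finset.mul_sum, cycSym_mono, hper.sum_range_add 1]
  rw [Finset.sum_comm]
  refine Finset.sum_congr rfl fun q hq => sum_Xvar_mul_ite_head ?_
  rw [Ne, List.rotate_eq_nil_iff, ← List.length_eq_zero_iff]
  exact (Finset.mem_range.mp hq).ne_bot

lemma List.length_tail_add_one_of_head?_eq_some {α : Type*} {l : List α} {a : α}
    (h : l.head? = some a) : l.tail.length + 1 = l.length := by
  cases l <;> simp_all

lemma cycDeriv_comp_degScale (k : Fin n) (f : ℕ → K) :
    cycDeriv k ∘ₗ degScale f = degScale (fun p => f (p + 1)) ∘ₗ cycDeriv k := by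
  refine linearMap_ext_of_mono fun w => ?_
  simp only [LinearMap.comp_apply, degScale_mono, map_smul, cycDeriv_mono, map_sum,
    Finset.smul_sum]
  refine Finset.sum_congr rfl fun q _ => ?_
  split_ifs with hhead
  · rw [degScale_mono, List.length_tail_add_one_of_head?_eq_some hhead, List.length_rotate]
  · rw [map_zero, smul_zero]

lemma cycDeriv_comp_cycSym (k : Fin n) :
    cycDeriv k ∘ₗ cycSym = (numOp + LinearMap.id) ∘ₗ (cycDeriv k : FreePoly K n →ₗ[K] _) := by
  have hN : cycDeriv k ∘ₗ cycSym = cycDeriv k ∘ₗ (degScale fun p => (p : K)) := by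
    refine linearMap_ext_of_mono fun w => ?_
    simp only [LinearMap.comp_apply, cycSym_mono, map_sum, cycDeriv_mono_rotate, degScale_mono,
      Finset.sum_const, Finset.card_range, map_nsmul, Nat.cast_smul_eq_nsmul]
  rw [hN, cycDeriv_comp_degScale, numOp_add_id]
  simp only [Nat.cast_add_one]

end

variable {K : Type} [Field K] [CharZero K] {n : ℕ}

theorem isCyclicGradient_iff_cycDeriv_eq (P : Fin n → FreePoly K n) :
    (∃ Q : FreePoly K n, ∀ j : Fin n, cycDeriv j Q = P j) ↔
      ∀ k : Fin n, cycDeriv k (∑ j : Fin n, Xvar K j * P j) = numOp (P k) + P k := by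
  constructor
  · rintro ⟨Q, hQ⟩ k
    have hsum : ∑ j, Xvar K j * P j = cycSym Q := by
      simp only [← hQ, sum_Xvar_mul_cycDeriv]
    rw [hsum, ← hQ k]
    exact LinearMap.congr_fun (cycDeriv_comp_cycSym k) Q
  · intro h
    refine ⟨degScale (fun p => (p : K)⁻¹) (∑ j, Xvar K j * P j), fun j => ?_⟩
    calc cycDeriv j (degScale (fun p => (p : K)⁻¹) (∑ j, Xvar K j * P j))
        = degScale (fun p => ((p + 1 : ℕ) : K)⁻¹) (cycDeriv j (∑ j, Xvar K j * P j)) :=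
          LinearMap.congr_fun (cycDeriv_comp_degScale j fun p => (p : K)⁻¹) _
      _ = degScale (fun p => ((p + 1 : ℕ) : K)⁻¹) (degScale (fun p => (p : K) + 1) (P j)) := by
          rw [h j, ← numOp_add_id, LinearMap.add_apply, LinearMap.id_apply]
      _ = P j := degScale_degScale (fun p => by
          rw [Nat.cast_add_one, inv_mul_cancel₀ (Nat.cast_add_one_ne_zero p)]) _
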